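/- arXiv:1310.1386 — 2 statements merged into one kernel-verified Lean document; each statement's English description precedes it below -/
import Mathlib

section
/- For every integer r ≥ 2 there exists a natural number n_r ≥ r - 1 such that for every natural number k, every surjective colouring Δ: ℕ^(r) ↠ [k], and every natural number n ≥ n_r with k > C(n,r) + 1, the set F_Δ intersects the interval I_{r,n} = ( C(n,r) + 1, C(n+1,r) + 1 ]. -/
open Finset

/-- The set of colours attained by `Δ` on `r`-element subsets of `X`. -/
def coloursOn {α : Type*} (r : ℕ) (Δ : Finset ℕ → α) (X : Set ℕ) : Set α :=
  Δ '' {e : Finset ℕ | ↑e ⊆ X ∧ e.card = r}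

/-- `γ(X)`: the number of colours attained by `Δ` on `r`-element subsets of `X`. -/
noncomputable def gamma {α : Type*} (r : ℕ) (Δ : Finset ℕ → α) (X : Set ℕ) : ℕ :=
  (coloursOn r Δ X).ncard

/-- `F_Δ`: the set of values `γ(X)` over infinite subsets `X ⊆ ℕ`. -/
def Fdelta {α : Type*} (r : ℕ) (Δ : Finset ℕ → α) : Set ℕ :=
  {m | ∃ X : Set ℕ, X.Infinite ∧ gamma r Δ X = m}

/-- `Δ` is a surjective colouring of `ℕ^(r)`, the `r`-element subsets of `ℕ`,
onto the colour set `[k] = {1, …, k}`. -/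
def IsColouring (r k : ℕ) (Δ : Finset ℕ → ℕ) : Prop :=
  (∀ e : Finset ℕ, e.card = r → Δ e ∈ Finset.Icc 1 k) ∧
  ∀ c ∈ Finset.Icc 1 k, ∃ e : Finset ℕ, e.card = r ∧ Δ e = c

/-!
If `k ≤ C(n+1,r) + 1`, take `X = ℕ`. Otherwise fix a finite `S` containing an `r`-set of every
colour. Ramsey's theorem, applied to `t ↦ Δ (s ∪ t)` for each `s ⊆ S` with `|s| ≤ r`, gives an
infinite `M` disjoint from `S` on which `Δ (s ∪ t) = φ s` depends only on `s`. So for `T ⊆ S`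
the colours on `T ∪ M` are the values of `φ` on subsets of `T` of size `≤ r`; for `T = S` there
are at least `k` of them.

Represent these colours by distinct subsets of `T`, one per colour. If deleting any point of `T`
left at most `C(n,r) + 1` colours, every point would miss at most `C(n,r) + 1` of the
representatives; summing over the points bounds their total size from below, which for `n ≥ 3r`
is impossible for sets of size `≤ r` (at most `C(|T|,i)` of them have size `i`). Hence while
`γ(T ∪ M) > C(n+1,r) + 1` we may delete a point keeping `γ(T ∪ M) > C(n,r) + 1`, and starting
from `T = S` we end inside `I_{r,n}`.
-/

section Ramsey

variable {α : Type*}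

theorem coloursOn_mono {d : ℕ} {C : Finset ℕ → α} {X Y : Set ℕ} (h : X ⊆ Y) :
    coloursOn d C X ⊆ coloursOn d C Y :=
  Set.image_mono fun _ he => ⟨he.1.trans h, he.2⟩

theorem coloursOn_union_left_subset {d : ℕ} {C : Finset ℕ → α} {s : Finset ℕ} {X : Set ℕ}
    (hsX : Disjoint (↑s : Set ℕ) X) :
    coloursOn d (fun t => C (s ∪ t)) X ⊆ coloursOn (d + #s) C (↑s ∪ X) := by
  rintro _ ⟨t, ⟨htX, rfl⟩, rfl⟩
  have hst : Disjoint s t := by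
    rw [← disjoint_coe]
    exact hsX.mono_right htX
  refine ⟨s ∪ t, ⟨?_, ?_⟩, rfl⟩
  · rw [coe_union]
    exact Set.union_subset_union_right _ htX
  · rw [card_union_of_disjoint hst, add_comm]

/-- The link of the least point of `N` is homogeneous on `N'`; taking least points makes the
chosen points increase, so the least point of any `t` is the one whose link contains the rest. -/
theorem exists_infinite_subset_forall_eq_of_link {d : ℕ} {C : Finset ℕ → α} {K : Set α}
    (hK : K.Finite) {M : Set ℕ} (hM : M.Infinite)
    (hlink : ∀ N ⊆ M, N.Infinite → ∃ N' ⊆ N \ {sInf N}, N'.Infinite ∧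
      ∃ c ∈ K, ∀ t : Finset ℕ, ↑t ⊆ N' → #t = d → C ({sInf N} ∪ t) = c) :
    ∃ M' ⊆ M, M'.Infinite ∧
      ∃ c ∈ K, ∀ t : Finset ℕ, ↑t ⊆ M' → #t = d + 1 → C t = c := by
  have hlink' : ∀ N : {N : Set ℕ // N ⊆ M ∧ N.Infinite},
      ∃ N' : {N : Set ℕ // N ⊆ M ∧ N.Infinite}, N'.1 ⊆ N.1 \ {sInf N.1} ∧
        ∃ c ∈ K, ∀ t : Finset ℕ, ↑t ⊆ N'.1 → #t = d → C ({sInf N.1} ∪ t) = c := by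
    rintro ⟨N, hNM, hN⟩
    obtain ⟨N', hN'N, hN', hc⟩ := hlink N hNM hN
    exact ⟨⟨N', (hN'N.trans Set.sdiff_subset).trans hNM, hN'⟩, hN'N, hc⟩
  choose next hnext col hcol hhom using hlink'
  set seq : ℕ → {N : Set ℕ // N ⊆ M ∧ N.Infinite} :=
    fun i => next^[i] ⟨M, subset_rfl, hM⟩
  have hseq_succ : ∀ i, seq (i + 1) = next (seq i) := fun i => Function.iterate_succ_apply' _ _ _
  have hseq_anti : Antitone fun i => (seq i).1 := antitone_nat_of_succ_le fun i => by
    rw [hseq_succ]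
    exact (hnext _).trans Set.sdiff_subset
  set a : ℕ → ℕ := fun i => sInf (seq i).1
  have ha_mem : ∀ i, a i ∈ (seq i).1 := fun i => Nat.sInf_mem (seq i).2.2.nonempty
  have ha_mono : StrictMono a := strictMono_nat_of_lt_succ fun i => by
    have h := hnext (seq i) (hseq_succ i ▸ ha_mem (i + 1))
    exact lt_of_le_of_ne (Nat.sInf_le h.1) (Ne.symm h.2)
  have : Finite K := hK.to_subtype
  obtain ⟨⟨c, hc⟩, hfiber⟩ :=
    Finite.exists_infinite_fiber fun i => (⟨col (seq i), hcol (seq i)⟩ : K)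
  set I : Set ℕ := {i | col (seq i) = c}
  have hI : I.Infinite := by
    convert Set.infinite_coe_iff.mp hfiber using 1
    ext i
    simp [I]
  refine ⟨a '' I, ?_, hI.image ha_mono.injective.injOn, c, hc, fun t ht htd => ?_⟩
  · rintro _ ⟨i, -, rfl⟩
    exact (seq i).2.1 (ha_mem i)
  have hne : t.Nonempty := card_pos.mp (by omega)
  obtain ⟨i₀, hi₀, hx₀⟩ := ht (min'_mem t hne)
  have htail : ↑(t.erase (t.min' hne)) ⊆ (next (seq i₀)).1 := by
    intro x hx
    obtain ⟨j, -, rfl⟩ := ht (mem_of_mem_erase hx)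
    have hlt : i₀ < j := ha_mono.lt_iff_lt.mp (hx₀ ▸ min'_lt_of_mem_erase_min' t hne hx)
    exact hseq_succ i₀ ▸ hseq_anti hlt (ha_mem j)
  have := hhom (seq i₀) _ htail (by rw [card_erase_of_mem (min'_mem t hne), htd]; rfl)
  rw [show sInf (seq i₀).1 = t.min' hne from hx₀, ← insert_eq,
    insert_erase (min'_mem t hne)] at this
  exact this.trans hi₀

/-- Ramsey's theorem. -/
theorem exists_infinite_subset_forall_eq (d : ℕ) (C : Finset ℕ → α) {M : Set ℕ}
    (hM : M.Infinite) (hC : (coloursOn d C M).Finite) :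
    ∃ M' ⊆ M, M'.Infinite ∧
      ∃ c ∈ coloursOn d C M, ∀ t : Finset ℕ, ↑t ⊆ M' → #t = d → C t = c := by
  induction d generalizing C M with
  | zero =>
    exact ⟨M, subset_rfl, hM, C ∅, ⟨∅, ⟨by simp, rfl⟩, rfl⟩,
      fun t _ ht => by rw [card_eq_zero.mp ht]⟩
  | succ d ih =>
    refine exists_infinite_subset_forall_eq_of_link hC hM fun N hNM hN => ?_
    have hsub : ↑({sInf N} : Finset ℕ) ∪ N \ {sInf N} ⊆ M := by
      rw [coe_singleton, Set.union_sdiff_self]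
      exact Set.union_subset (Set.singleton_subset_iff.mpr (hNM (Nat.sInf_mem hN.nonempty))) hNM
    have hlinkC :
        coloursOn d (fun t => C ({sInf N} ∪ t)) (N \ {sInf N}) ⊆ coloursOn (d + 1) C M :=
      (coloursOn_union_left_subset (by simp)).trans (coloursOn_mono hsub)
    obtain ⟨N', hN'N, hN', c, hc, hhom⟩ :=
      ih _ (hN.sdiff (Set.finite_singleton _)) (hC.subset hlinkC)
    exact ⟨N', hN'N, hN', c, hlinkC hc, hhom⟩

theorem exists_infinite_subset_forall_eq_of_finset {ι : Type*} (P : Finset ι) (d : ι → ℕ)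
    (C : ι → Finset ℕ → α) {M : Set ℕ} (hM : M.Infinite)
    (hC : ∀ i ∈ P, (coloursOn (d i) (C i) M).Finite) :
    ∃ M' ⊆ M, M'.Infinite ∧
      ∀ i ∈ P, ∃ c, ∀ t : Finset ℕ, ↑t ⊆ M' → #t = d i → C i t = c := by
  classical
  induction P using Finset.induction_on with
  | empty => exact ⟨M, subset_rfl, hM, by simp⟩
  | insert i P _ ih =>
    obtain ⟨M₁, hM₁M, hM₁, hP⟩ := ih fun j hj => hC j (mem_insert_of_mem hj)
    obtain ⟨M₂, hM₂M₁, hM₂, c, -, hc⟩ := exists_infinite_subset_forall_eq (d i) (C i)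
      hM₁ ((hC i (mem_insert_self i P)).subset (coloursOn_mono hM₁M))
    refine ⟨M₂, hM₂M₁.trans hM₁M, hM₂, fun j hj => ?_⟩
    rcases mem_insert.mp hj with rfl | hj
    · exact ⟨c, hc⟩
    · obtain ⟨c', hc'⟩ := hP j hj
      exact ⟨c', fun t ht => hc' t (ht.trans hM₂M₁)⟩

end Ramsey

theorem sum_range_choose_le_choose {N p : ℕ} (h : 3 * p + 2 ≤ N) :
    ∑ i ∈ range (p + 1), N.choose i ≤ N.choose (p + 1) := by
  induction p with
  | zero =>
    rw [zero_add, sum_range_one, Nat.choose_zero_right, Nat.choose_one_right]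
    omega
  | succ p ih =>
    have hdouble : 2 * N.choose (p + 1) ≤ N.choose (p + 1 + 1) := by
      refine Nat.le_of_mul_le_mul_right ?_ (by omega : 0 < p + 1 + 1)
      calc 2 * N.choose (p + 1) * (p + 1 + 1) = N.choose (p + 1) * (2 * (p + 2)) := by ring
        _ ≤ N.choose (p + 1) * (N - (p + 1)) := Nat.mul_le_mul_left _ (by omega)
        _ = N.choose (p + 1 + 1) * (p + 1 + 1) := (Nat.choose_succ_right_eq N (p + 1)).symm
    rw [sum_range_succ]
    have := ih (by omega)
    omega

theorem sum_range_choose_le_choose_succ {m n r : ℕ} (hr : 2 ≤ r) (hn : 3 * r ≤ n)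
    (hm : m < n) :
    ∑ i ∈ range (r + 1), m.choose i ≤ (n + 1).choose r := by
  obtain ⟨q, rfl⟩ : ∃ q, r = q + 2 := ⟨r - 2, by omega⟩
  obtain ⟨N, rfl⟩ : ∃ N, n = N + 1 := ⟨n - 1, by omega⟩
  have hpascal : (N + 1 + 1).choose (q + 2) =
      N.choose q + 2 * N.choose (q + 1) + N.choose (q + 2) := by
    rw [Nat.choose_succ_succ', Nat.choose_succ_succ' N, Nat.choose_succ_succ' N (q + 1)]
    ring
  calc ∑ i ∈ range (q + 2 + 1), m.choose i
      ≤ ∑ i ∈ range (q + 2 + 1), N.choose i :=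
        sum_le_sum fun i _ => Nat.choose_le_choose i (by omega)
    _ ≤ N.choose (q + 1) + N.choose (q + 1) + N.choose (q + 2) := by
        rw [sum_range_succ, sum_range_succ]
        have := sum_range_choose_le_choose (N := N) (p := q) (by omega)
        omega
    _ ≤ (N + 1 + 1).choose (q + 2) := by omega

/-- Here `s` is the total size of `h` sets of size `≤ r` in an `m`-set. The cases `m = n`,
`m = n + 1` and `m ≥ n + 2` need `hs₂`, `hs₁` and `hs` respectively. -/
theorem mul_choose_add_lt {r n m h s : ℕ} (hr : 2 ≤ r) (hn : 3 * r ≤ n) (hm : n ≤ m)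
    (hh : (n + 1).choose r + 2 ≤ h) (hs : s ≤ r * h) (hs₁ : s + h ≤ r * h + m.choose r)
    (hs₂ : s + 2 * h ≤ r * h + m.choose (r - 1) + 2 * m.choose r) :
    m * (n.choose r + 1) + s < m * h := by
  obtain ⟨q, rfl⟩ : ∃ q, r = q + 2 := ⟨r - 2, by omega⟩
  obtain ⟨w, rfl⟩ : ∃ w, n = q + 2 + w := ⟨n - (q + 2), by omega⟩
  have hpascal := Nat.choose_succ_succ' (q + 2 + w) (q + 1)
  have hratio := Nat.choose_succ_right_eq (q + 2 + w) (q + 1)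
  rw [show q + 2 + w - (q + 1) = w + 1 by omega] at hratio
  rw [show q + 2 - 1 = q + 1 by omega] at hs₂
  rcases Nat.lt_trichotomy m (q + 2 + w + 1) with hlt | rfl | hgt
  · obtain rfl : m = q + 2 + w := by omega
    nlinarith
  · have := congrArg ((w + 1) * ·) hpascal
    nlinarith
  · obtain ⟨v, rfl⟩ : ∃ v, m = q + 2 + w + 2 + v := ⟨m - (q + 2 + w + 2), by omega⟩
    have := Nat.choose_pos (n := q + 2 + w) (k := q + 1) (by omega)
    nlinarith

section Family

variable {α : Type*} {T : Finset α} {𝓕 : Finset (Finset α)}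

theorem sum_card_filter_mem_eq_sum_card [DecidableEq α] (h𝓕 : ∀ F ∈ 𝓕, F ⊆ T) :
    ∑ a ∈ T, #{F ∈ 𝓕 | a ∈ F} = ∑ F ∈ 𝓕, #F := by
  have := sum_card_bipartiteAbove_eq_sum_card_bipartiteBelow (s := T) (t := 𝓕) (· ∈ ·)
  simp only [bipartiteAbove, bipartiteBelow, filter_mem_eq_inter] at this
  rw [this]
  exact sum_congr rfl fun F hF => by rw [inter_eq_right.mpr (h𝓕 F hF)]

theorem card_filter_card_eq_le_choose (h𝓕 : ∀ F ∈ 𝓕, F ⊆ T) (i : ℕ) :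
    #{F ∈ 𝓕 | #F = i} ≤ (#T).choose i := by
  rw [← card_powersetCard]
  refine card_le_card fun F hF => ?_
  rw [mem_filter] at hF
  exact mem_powersetCard.mpr ⟨h𝓕 F hF.1, hF.2⟩

variable {r : ℕ}

theorem card_le_sum_range_choose (h𝓕 : ∀ F ∈ 𝓕, F ⊆ T ∧ #F ≤ r) :
    #𝓕 ≤ ∑ i ∈ range (r + 1), (#T).choose i := by
  rw [card_eq_sum_card_fiberwise (f := card) fun F hF =>
    mem_range.mpr (Nat.lt_succ_of_le (h𝓕 F hF).2)]
  exact sum_le_sum fun i _ => card_filter_card_eq_le_choose (fun F hF => (h𝓕 F hF).1) i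

theorem sum_card_add_two_mul_card_le (h𝓕 : ∀ F ∈ 𝓕, F ⊆ T ∧ #F ≤ r) :
    ∑ F ∈ 𝓕, #F + 2 * #𝓕 ≤ r * #𝓕 + (#T).choose (r - 1) + 2 * (#T).choose r := by
  have hweight : ∀ F ∈ 𝓕,
      #F + 2 ≤ r + (if #F = r - 1 then 1 else 0) + 2 * (if #F = r then 1 else 0) := by
    intro F hF
    have := (h𝓕 F hF).2
    split_ifs <;> omega
  have hsum := sum_le_sum hweight
  simp only [sum_add_distrib, sum_const, smul_eq_mul, ← mul_sum, ← card_filter] at hsum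
  have := card_filter_card_eq_le_choose (fun F hF => (h𝓕 F hF).1) (r - 1)
  have := card_filter_card_eq_le_choose (fun F hF => (h𝓕 F hF).1) r
  linarith

theorem sum_card_add_card_le (h𝓕 : ∀ F ∈ 𝓕, F ⊆ T ∧ #F ≤ r) :
    ∑ F ∈ 𝓕, #F + #𝓕 ≤ r * #𝓕 + (#T).choose r := by
  have hweight : ∀ F ∈ 𝓕, #F + 1 ≤ r + (if #F = r then 1 else 0) := by
    intro F hF
    have := (h𝓕 F hF).2
    split_ifs <;> omega
  have hsum := sum_le_sum hweight
  simp only [sum_add_distrib, sum_const, smul_eq_mul, ← card_filter] at hsum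
  have := card_filter_card_eq_le_choose (fun F hF => (h𝓕 F hF).1) r
  linarith

theorem exists_card_filter_notMem_ge [DecidableEq α] {n : ℕ} (h𝓕 : ∀ F ∈ 𝓕, F ⊆ T ∧ #F ≤ r)
    (hr : 2 ≤ r) (hn : 3 * r ≤ n) (hcard : (n + 1).choose r + 2 ≤ #𝓕) :
    ∃ a ∈ T, n.choose r + 2 ≤ #{F ∈ 𝓕 | a ∉ F} := by
  by_contra! hsmall
  have hT : n ≤ #T := by
    by_contra! hT
    have := card_le_sum_range_choose h𝓕
    have := sum_range_choose_le_choose_succ hr hn hT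
    omega
  have hbudget : #T * #𝓕 ≤ #T * (n.choose r + 1) + ∑ F ∈ 𝓕, #F := calc
    #T * #𝓕 = ∑ a ∈ T, (#{F ∈ 𝓕 | a ∉ F} + #{F ∈ 𝓕 | a ∈ F}) := by
      simp only [add_comm, card_filter_add_card_filter_not, sum_const, smul_eq_mul]
    _ ≤ ∑ a ∈ T, (n.choose r + 1 + #{F ∈ 𝓕 | a ∈ F}) :=
      sum_le_sum fun a ha => by have := hsmall a ha; omega
    _ = #T * (n.choose r + 1) + ∑ F ∈ 𝓕, #F := by
      rw [sum_add_distrib, sum_const, smul_eq_mul,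
        sum_card_filter_mem_eq_sum_card fun F hF => (h𝓕 F hF).1]
  have := mul_choose_add_lt hr hn hT hcard
    (by simpa [mul_comm] using sum_le_card_nsmul _ _ _ fun F hF => (h𝓕 F hF).2)
    (sum_card_add_card_le h𝓕) (sum_card_add_two_mul_card_le h𝓕)
  omega

end Family

def smallSubsetValues {α β : Type*} [DecidableEq β] (r : ℕ) (φ : Finset α → β)
    (T : Finset α) : Finset β :=
  {s ∈ T.powerset | #s ≤ r}.image φ

theorem coloursOn_union_eq_smallSubsetValues {α : Type*} [DecidableEq α] {r : ℕ}
    {Δ φ : Finset ℕ → α} {T : Finset ℕ} {M : Set ℕ} (hM : M.Infinite)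
    (hTM : Disjoint (↑T : Set ℕ) M)
    (hφ : ∀ s ⊆ T, #s ≤ r →
      ∀ t : Finset ℕ, ↑t ⊆ M → #t = r - #s → Δ (s ∪ t) = φ s) :
    coloursOn r Δ (↑T ∪ M) = smallSubsetValues r φ T := by
  ext c
  simp only [smallSubsetValues, coe_image, coe_filter, mem_powerset]
  constructor
  · rintro ⟨e, ⟨he, rfl⟩, rfl⟩
    have hsdiff : ↑(e \ T) ⊆ M := by
      intro x hx
      rw [coe_sdiff] at hx
      exact (he hx.1).resolve_left hx.2
    have hcard := card_inter_add_card_sdiff e T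
    refine ⟨e ∩ T, ⟨inter_subset_right, (card_le_card inter_subset_left)⟩, ?_⟩
    rw [← hφ _ inter_subset_right (card_le_card inter_subset_left) _ hsdiff (by omega)]
    exact congrArg Δ (sup_inf_sdiff e T)
  · rintro ⟨s, ⟨hsT, hsr⟩, rfl⟩
    obtain ⟨t, htM, htcard⟩ := hM.exists_subset_card_eq (r - #s)
    have hst : Disjoint s t := by
      rw [← disjoint_coe]; exact (hTM.mono_left (coe_subset.mpr hsT)).mono_right htM
    refine ⟨s ∪ t, ⟨?_, ?_⟩, hφ s hsT hsr t htM htcard⟩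
    · rw [coe_union]; exact Set.union_subset_union (coe_subset.mpr hsT) htM
    · rw [card_union_of_disjoint hst]; omega

theorem exists_erase_le_card_smallSubsetValues {α β : Type*} [DecidableEq α] [DecidableEq β]
    {r n : ℕ} (hr : 2 ≤ r) (hn : 3 * r ≤ n) (φ : Finset α → β) {T : Finset α}
    (hT : (n + 1).choose r + 2 ≤ #(smallSubsetValues r φ T)) :
    ∃ a ∈ T, n.choose r + 2 ≤ #(smallSubsetValues r φ (T.erase a)) := by
  obtain ⟨𝓕, h𝓕sub, hinj, himage⟩ := exists_subset_injOn_image_eq_of_surjOn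
    (↑{s ∈ T.powerset | #s ≤ r} : Set (Finset α)) (smallSubsetValues r φ T)
    (by rw [smallSubsetValues, coe_image]; exact Set.surjOn_image _ _)
  have h𝓕 : ∀ F ∈ 𝓕, F ⊆ T ∧ #F ≤ r := fun F hF => by
    simpa using h𝓕sub (mem_coe.mpr hF)
  rw [← himage, card_image_of_injOn hinj] at hT
  obtain ⟨a, haT, ha⟩ := exists_card_filter_notMem_ge h𝓕 hr hn hT
  refine ⟨a, haT, ha.trans ?_⟩
  rw [← card_image_of_injOn (hinj.mono (coe_subset.mpr (filter_subset _ _)))]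
  refine card_le_card (image_subset_image fun F hF => ?_)
  rw [mem_filter] at hF ⊢
  exact ⟨mem_powerset.mpr (subset_erase.mpr ⟨(h𝓕 F hF.1).1, hF.2⟩), (h𝓕 F hF.1).2⟩

theorem exists_subset_le_le_of_erase {α : Type*} [DecidableEq α] (g : Finset α → ℕ)
    {L U : ℕ} (S : Finset α) (hS : L ≤ g S)
    (herase : ∀ T ⊆ S, U < g T → ∃ a ∈ T, L ≤ g (T.erase a)) :
    ∃ T ⊆ S, L ≤ g T ∧ g T ≤ U := by
  induction S using Finset.strongInduction with
  | H S ih =>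
    by_cases hU : g S ≤ U
    · exact ⟨S, subset_rfl, hS, hU⟩
    · obtain ⟨a, ha, hL⟩ := herase S subset_rfl (not_le.mp hU)
      obtain ⟨T, hT, hT'⟩ := ih (S.erase a) (erase_ssubset ha) hL
        fun T hT => herase T (hT.trans (erase_subset a S))
      exact ⟨T, hT.trans (erase_subset a S), hT'⟩

section Colouring

variable {r k : ℕ} {Δ : Finset ℕ → ℕ}

theorem IsColouring.coloursOn_subset (hΔ : IsColouring r k Δ) (X : Set ℕ) :
    coloursOn r Δ X ⊆ ↑(Icc 1 k) := by
  rintro _ ⟨e, ⟨-, he⟩, rfl⟩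
  exact hΔ.1 e he

theorem IsColouring.gamma_univ (hΔ : IsColouring r k Δ) : gamma r Δ Set.univ = k := by
  have hcolours : coloursOn r Δ Set.univ = ↑(Icc 1 k) := by
    refine (hΔ.coloursOn_subset _).antisymm fun c hc => ?_
    obtain ⟨e, he, rfl⟩ := hΔ.2 c hc
    exact ⟨e, ⟨Set.subset_univ _, he⟩, rfl⟩
  rw [gamma, hcolours, Set.ncard_coe_finset, Nat.card_Icc, Nat.add_sub_cancel]

theorem IsColouring.exists_finset_subset_coloursOn (hΔ : IsColouring r k Δ) :
    ∃ S : Finset ℕ, ↑(Icc 1 k) ⊆ coloursOn r Δ ↑S := by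
  classical
  choose! e he using hΔ.2
  refine ⟨(Icc 1 k).biUnion e, fun c hc => ⟨e c, ⟨?_, (he c hc).1⟩, (he c hc).2⟩⟩
  exact coe_subset.mpr (subset_biUnion_of_mem e hc)

theorem IsColouring.exists_infinite_union_eq (hΔ : IsColouring r k Δ) (S : Finset ℕ) :
    ∃ M ⊆ (↑S : Set ℕ)ᶜ, M.Infinite ∧ ∃ φ : Finset ℕ → ℕ,
      ∀ s ⊆ S, #s ≤ r → ∀ t : Finset ℕ, ↑t ⊆ M → #t = r - #s → Δ (s ∪ t) = φ s := by
  have hfinite : ∀ s ∈ {s ∈ S.powerset | #s ≤ r},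
      (coloursOn (r - #s) (fun t => Δ (s ∪ t)) (↑S)ᶜ).Finite := by
    intro s hs
    rw [mem_filter, mem_powerset] at hs
    have hlink := coloursOn_union_left_subset (d := r - #s) (C := Δ)
      (disjoint_compl_right.mono_left (coe_subset.mpr hs.1))
    rw [Nat.sub_add_cancel hs.2] at hlink
    exact (Icc 1 k).finite_toSet.subset (hlink.trans (hΔ.coloursOn_subset _))
  obtain ⟨M, hMS, hM, hhom⟩ := exists_infinite_subset_forall_eq_of_finset _ (fun s => r - #s)
    (fun s t => Δ (s ∪ t)) S.finite_toSet.infinite_compl hfinite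
  choose! φ hφ using hhom
  exact ⟨M, hMS, hM, φ, fun s hsS hsr => hφ s (by simp [hsS, hsr])⟩

end Colouring

/-- **Theorem 3.** For every `r ≥ 2` there exists `n_r ≥ r - 1` such that for every surjective
colouring `Δ : ℕ^(r) ↠ [k]` and every `n ≥ n_r` with `k > C(n,r) + 1`, the set `F_Δ` meets
the interval `I_{r,n} = (C(n,r) + 1, C(n+1,r) + 1]`. -/
theorem Fdelta_meets_interval (r : ℕ) (hr : 2 ≤ r) :
    ∃ nr : ℕ, r - 1 ≤ nr ∧
      ∀ (k : ℕ) (Δ : Finset ℕ → ℕ), IsColouring r k Δ →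
        ∀ n : ℕ, nr ≤ n → Nat.choose n r + 1 < k →
          ∃ m' ∈ Fdelta r Δ,
            Nat.choose n r + 1 < m' ∧ m' ≤ Nat.choose (n + 1) r + 1 := by
  classical
  refine ⟨3 * r, by omega, fun k Δ hΔ n hn hk => ?_⟩
  by_cases hk' : k ≤ (n + 1).choose r + 1
  · exact ⟨k, ⟨Set.univ, Set.infinite_univ, hΔ.gamma_univ⟩, hk, hk'⟩
  obtain ⟨S, hS⟩ := hΔ.exists_finset_subset_coloursOn
  obtain ⟨M, hMS, hM, φ, hφ⟩ := hΔ.exists_infinite_union_eq S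
  have hcolours : ∀ T ⊆ S, coloursOn r Δ (↑T ∪ M) = smallSubsetValues r φ T :=
    fun T hTS => coloursOn_union_eq_smallSubsetValues hM
      ((disjoint_compl_right.mono_left (coe_subset.mpr hTS)).mono_right hMS)
      fun s hsT => hφ s (hsT.trans hTS)
  have hkS : k ≤ #(smallSubsetValues r φ S) := by
    simpa using card_le_card (coe_subset.mp (hS.trans
      ((coloursOn_mono Set.subset_union_left).trans (hcolours S subset_rfl).le)))
  obtain ⟨T, hTS, hT⟩ := exists_subset_le_le_of_erase (fun T => #(smallSubsetValues r φ T)) S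
    (by omega) fun T _ hT => exists_erase_le_card_smallSubsetValues hr hn φ hT
  refine ⟨_, ⟨↑T ∪ M, hM.mono Set.subset_union_right, ?_⟩, by omega, hT.2⟩
  rw [gamma, hcolours T hTS, Set.ncard_coe_finset]
end

section
/- Let r ≥ 2 and k ≥ 1 be integers, let Δ: ℕ^(r) ↠ [k] be a surjective colouring, and let m ∈ F_Δ with m ≥ 2. Let a = a(m,Δ) be as guaranteed by the main lemma (so Σ_{i=0}^{r} C(a,i) ≥ m). If m = Σ_{i=t+1}^{r} C(a,i) + s + 1 for some integers s ≥ 0 and t with 0 ≤ t + 1 ≤ r, then there exists m' ∈ F_Δ with Σ_{i=t+1}^{r} C(a-1,i) + (1 - t/a)·s + 1 ≤ m' < m, where the left inequality is over the rationals. -/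
/-!
Every colour `χ` attained on `X` is the colour of some `r`-subset of `X` whose trace on `A` is as
small as possible; call that trace `minTrace χ`. Since colours are determined by traces, distinct
colours have distinct minimal traces, and the colour of an `r`-subset of `X \ A` has minimal trace
`∅`. Deleting `v ∈ A` from `X` keeps every colour whose minimal trace avoids `v`, so summing over
`v ∈ A` and double counting gives `a m ≤ Σ_v γ(X \ {v}) + Σ_χ |minTrace χ|`. Writing
`|B| = min(|B|, t) + (|B| - t)` and counting subsets of `A` by size bounds the last sum by
`t (m - 1) + Σ_{i > t} (i - t) C(a, i)`, and `a C(a - 1, i) = (a - i) C(a, i)` turns this into the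
claimed lower bound for the largest `γ(X \ {v})`.
-/

open Finset

namespace Finset

variable {β : Type*} {A : Finset β} {𝓑 : Finset (Finset β)} {r : ℕ}

theorem sum_min_card_le_of_empty_mem [DecidableEq β] (h𝓑 : ∅ ∈ 𝓑) (t : ℕ) :
    ∑ B ∈ 𝓑, min #B t ≤ t * (#𝓑 - 1) := by
  rw [← add_sum_erase _ _ h𝓑, card_empty, Nat.zero_min, zero_add, ← card_erase_of_mem h𝓑,
    mul_comm, ← smul_eq_mul, ← sum_const]
  exact sum_le_sum fun _ _ ↦ min_le_right _ _

theorem sum_card_tsub_le_of_subset (h𝓑 : ∀ B ∈ 𝓑, B ⊆ A ∧ #B ≤ r) (t : ℕ) :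
    ∑ B ∈ 𝓑, (#B - t) ≤ ∑ i ∈ Icc (t + 1) r, (i - t) * (#A).choose i := by
  have hmaps : ∀ B ∈ 𝓑.filter (t < #·), #B ∈ Icc (t + 1) r := fun B hB ↦ by
    rw [mem_filter] at hB
    exact mem_Icc.2 ⟨hB.2, (h𝓑 B hB.1).2⟩
  calc ∑ B ∈ 𝓑, (#B - t)
      = ∑ B ∈ 𝓑.filter (t < #·), (#B - t) :=
        (sum_filter_of_ne fun B _ h ↦ Nat.lt_of_sub_ne_zero h).symm
    _ = ∑ i ∈ Icc (t + 1) r, ∑ B ∈ (𝓑.filter (t < #·)).filter (#· = i), (i - t) :=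
        (sum_fiberwise_of_maps_to' hmaps (· - t)).symm
    _ ≤ ∑ i ∈ Icc (t + 1) r, (i - t) * (#A).choose i := by
        gcongr with i
        rw [sum_const, smul_eq_mul, mul_comm, ← card_powersetCard]
        gcongr
        intro B hB
        simp only [mem_filter] at hB
        exact mem_powersetCard.2 ⟨(h𝓑 B hB.1.1).1, hB.2⟩

theorem sum_card_le_of_empty_mem [DecidableEq β] (h𝓑 : ∀ B ∈ 𝓑, B ⊆ A ∧ #B ≤ r) (h𝓑₀ : ∅ ∈ 𝓑)
    (t : ℕ) :
    ∑ B ∈ 𝓑, #B ≤ t * (#𝓑 - 1) + ∑ i ∈ Icc (t + 1) r, (i - t) * (#A).choose i := by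
  calc ∑ B ∈ 𝓑, #B = ∑ B ∈ 𝓑, (min #B t + (#B - t)) := sum_congr rfl fun _ _ ↦ by omega
    _ ≤ _ := by
      rw [sum_add_distrib]
      exact add_le_add (sum_min_card_le_of_empty_mem h𝓑₀ t) (sum_card_tsub_le_of_subset h𝓑 t)

end Finset

namespace Nat

theorem choose_pred_mul_add_mul_choose (a i : ℕ) :
    a * (a - 1).choose i + i * a.choose i = a * a.choose i := by
  rcases a with _ | n
  · rcases i with _ | i <;> simp
  rcases le_or_gt i (n + 1) with hi | hi
  · rw [Nat.add_sub_cancel, mul_comm, choose_mul_succ_eq, mul_comm i, ← mul_add,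
      Nat.sub_add_cancel hi, mul_comm]
  · rw [Nat.add_sub_cancel, choose_eq_zero_of_lt hi, choose_eq_zero_of_lt (by omega : n < i)]
    simp

theorem sum_tsub_mul_choose_add (a r t : ℕ) :
    ∑ i ∈ Icc (t + 1) r, (i - t) * a.choose i + t * ∑ i ∈ Icc (t + 1) r, a.choose i =
      ∑ i ∈ Icc (t + 1) r, i * a.choose i := by
  rw [mul_sum, ← sum_add_distrib]
  refine sum_congr rfl fun i hi ↦ ?_
  rw [← add_mul, Nat.sub_add_cancel (Nat.le_of_succ_le (mem_Icc.1 hi).1)]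

theorem mul_sum_choose_pred_add (a : ℕ) (I : Finset ℕ) :
    a * ∑ i ∈ I, (a - 1).choose i + ∑ i ∈ I, i * a.choose i = a * ∑ i ∈ I, a.choose i := by
  simp only [mul_sum, ← sum_add_distrib, choose_pred_mul_add_mul_choose]

end Nat

theorem sum_choose_pred_add_le_of_mul_le {a r s t m m' : ℕ} (ha : 0 < a)
    (hm : m = ∑ i ∈ Icc (t + 1) r, a.choose i + s + 1)
    (h : a * m ≤ a * m' + (t * (m - 1) + ∑ i ∈ Icc (t + 1) r, (i - t) * a.choose i)) :
    ((∑ i ∈ Icc (t + 1) r, (a - 1).choose i : ℕ) : ℚ) + (1 - (t : ℚ) / a) * s + 1 ≤ m' := by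
  have hK := Nat.sum_tsub_mul_choose_add a r t
  have hS := Nat.mul_sum_choose_pred_add a (Icc (t + 1) r)
  subst hm
  have hnat : a * ∑ i ∈ Icc (t + 1) r, (a - 1).choose i + a * s + a ≤ a * m' + t * s := by
    simp only [Nat.add_sub_cancel, mul_add, mul_one] at h
    linarith
  have haq : (0 : ℚ) < a := by exact_mod_cast ha
  rw [← mul_le_mul_iff_right₀ haq, mul_add, mul_add, mul_one, ← mul_assoc, mul_sub, mul_one,
    mul_div_cancel₀ _ haq.ne']
  have := (Nat.cast_le (α := ℚ)).2 hnat
  push_cast at this ⊢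
  linarith

section MinTrace

variable {α : Type*} {r : ℕ} {Δ : Finset ℕ → α} {X : Set ℕ} {A : Finset ℕ} {χ : α}

def TraceDetermined (r : ℕ) (Δ : Finset ℕ → α) (X : Set ℕ) (A : Finset ℕ) : Prop :=
  ∀ e₁ e₂ : Finset ℕ, ↑e₁ ⊆ X → e₁.card = r → ↑e₂ ⊆ X → e₂.card = r →
    e₁ ∩ A = e₂ ∩ A → Δ e₁ = Δ e₂

open Classical in
/-- `∅` when `χ` is not attained on `X`. -/
noncomputable def minTrace (r : ℕ) (Δ : Finset ℕ → α) (X : Set ℕ) (A : Finset ℕ) (χ : α) :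
    Finset ℕ :=
  if h : χ ∈ coloursOn r Δ X then
    Function.argminOn (fun e ↦ #(e ∩ A)) {e : Finset ℕ | ((e : Set ℕ) ⊆ X ∧ #e = r) ∧ Δ e = χ} h
      ∩ A
  else ∅

theorem exists_inter_eq_minTrace (hχ : χ ∈ coloursOn r Δ X) :
    ∃ e : Finset ℕ, (↑e ⊆ X ∧ #e = r) ∧ Δ e = χ ∧ e ∩ A = minTrace r Δ X A χ := by
  rw [minTrace, dif_pos hχ]
  have := Function.argminOn_mem (fun e ↦ #(e ∩ A))
    {e : Finset ℕ | ((e : Set ℕ) ⊆ X ∧ #e = r) ∧ Δ e = χ} hχ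
  exact ⟨_, this.1, this.2, rfl⟩

theorem card_minTrace_le {e : Finset ℕ} (heX : ↑e ⊆ X) (her : #e = r) :
    #(minTrace r Δ X A (Δ e)) ≤ #(e ∩ A) := by
  rw [minTrace, dif_pos ⟨e, ⟨heX, her⟩, rfl⟩]
  exact Function.argminOn_le (fun e ↦ #(e ∩ A))
    {e' : Finset ℕ | ((e' : Set ℕ) ⊆ X ∧ #e' = r) ∧ Δ e' = Δ e} ⟨⟨heX, her⟩, rfl⟩

theorem minTrace_subset : minTrace r Δ X A χ ⊆ A := by
  unfold minTrace
  split_ifs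
  exacts [inter_subset_right, empty_subset A]

theorem card_minTrace_le_of_mem (hχ : χ ∈ coloursOn r Δ X) : #(minTrace r Δ X A χ) ≤ r := by
  obtain ⟨e, ⟨-, her⟩, -, he⟩ := exists_inter_eq_minTrace (A := A) hχ
  rw [← he, ← her]
  exact card_le_card inter_subset_left

theorem minTrace_eq_empty {e : Finset ℕ} (heX : ↑e ⊆ X) (her : #e = r) (hdisj : Disjoint e A) :
    minTrace r Δ X A (Δ e) = ∅ := by
  have := card_minTrace_le (Δ := Δ) (A := A) heX her
  rwa [disjoint_iff_inter_eq_empty.1 hdisj, card_empty, Nat.le_zero, card_eq_zero] at this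

theorem injOn_minTrace (hdet : TraceDetermined r Δ X A) :
    Set.InjOn (minTrace r Δ X A) (coloursOn r Δ X) := by
  intro χ hχ χ' hχ' h
  obtain ⟨e, ⟨heX, her⟩, rfl, he⟩ := exists_inter_eq_minTrace (A := A) hχ
  obtain ⟨e', ⟨he'X, he'r⟩, rfl, he'⟩ := exists_inter_eq_minTrace (A := A) hχ'
  exact hdet e e' heX her he'X he'r (he.trans (h.trans he'.symm))

theorem mem_coloursOn_diff_singleton {v : ℕ} (hχ : χ ∈ coloursOn r Δ X) (hv : v ∈ A)
    (hvχ : v ∉ minTrace r Δ X A χ) : χ ∈ coloursOn r Δ (X \ {v}) := by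
  obtain ⟨e, ⟨heX, her⟩, rfl, he⟩ := exists_inter_eq_minTrace (A := A) hχ
  refine ⟨e, ⟨fun x hx ↦ ⟨heX hx, ?_⟩, her⟩, rfl⟩
  rintro rfl
  exact hvχ (he ▸ mem_inter.2 ⟨hx, hv⟩)

theorem coloursOn_mono_s8 {Y : Set ℕ} (hYX : Y ⊆ X) : coloursOn r Δ Y ⊆ coloursOn r Δ X :=
  Set.image_mono fun _ he ↦ ⟨he.1.trans hYX, he.2⟩

theorem gamma_le_gamma_diff_singleton_add (hfin : (coloursOn r Δ X).Finite)
    {v : ℕ} (hv : v ∈ A) :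
    gamma r Δ X ≤ gamma r Δ (X \ {v}) + #{χ ∈ hfin.toFinset | v ∈ minTrace r Δ X A χ} := by
  have hkept : #{χ ∈ hfin.toFinset | v ∉ minTrace r Δ X A χ} ≤ gamma r Δ (X \ {v}) := by
    rw [gamma, ← Set.ncard_coe_finset]
    refine Set.ncard_le_ncard (fun χ hχ ↦ ?_) (hfin.subset (coloursOn_mono_s8 Set.sdiff_subset))
    simp only [coe_filter, Set.Finite.mem_toFinset, Set.mem_ofPred_eq] at hχ
    exact mem_coloursOn_diff_singleton hχ.1 hv hχ.2
  rw [gamma, Set.ncard_eq_toFinset_card _ hfin,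
    ← card_filter_add_card_filter_not (fun χ ↦ v ∈ minTrace r Δ X A χ)]
  omega

theorem sum_card_minTrace_le (hdet : TraceDetermined r Δ X A)
    (hX : (X \ ↑A).Infinite) (hfin : (coloursOn r Δ X).Finite) (t : ℕ) :
    ∑ χ ∈ hfin.toFinset, #(minTrace r Δ X A χ) ≤
      t * (gamma r Δ X - 1) + ∑ i ∈ Icc (t + 1) r, (i - t) * (#A).choose i := by
  have hinj : Set.InjOn (minTrace r Δ X A) hfin.toFinset := by
    simpa using injOn_minTrace hdet
  obtain ⟨D, hDX, hD⟩ := hX.exists_subset_card_eq r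
  rw [← sum_image hinj, gamma, Set.ncard_eq_toFinset_card _ hfin, ← card_image_of_injOn hinj]
  refine sum_card_le_of_empty_mem ?_ ?_ t
  · simp only [mem_image, Set.Finite.mem_toFinset]
    rintro _ ⟨χ, hχ, rfl⟩
    exact ⟨minTrace_subset, card_minTrace_le_of_mem hχ⟩
  · refine mem_image.2 ⟨Δ D, hfin.mem_toFinset.2 ⟨D, ⟨hDX.trans Set.sdiff_subset, hD⟩, rfl⟩, ?_⟩
    exact minTrace_eq_empty (hDX.trans Set.sdiff_subset) hD
      (disjoint_left.2 fun x hx hxA ↦ (hDX hx).2 hxA)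

theorem exists_mul_gamma_le (hdet : TraceDetermined r Δ X A)
    (hX : (X \ ↑A).Infinite) (hA : A.Nonempty) (hfin : (coloursOn r Δ X).Finite) (t : ℕ) :
    ∃ v ∈ A, #A * gamma r Δ X ≤ #A * gamma r Δ (X \ {v}) +
      (t * (gamma r Δ X - 1) + ∑ i ∈ Icc (t + 1) r, (i - t) * (#A).choose i) := by
  obtain ⟨v, hv, hmax⟩ := exists_max_image A (fun v ↦ gamma r Δ (X \ {v})) hA
  have hdouble : ∑ w ∈ A, #{χ ∈ hfin.toFinset | w ∈ minTrace r Δ X A χ} =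
      ∑ χ ∈ hfin.toFinset, #(minTrace r Δ X A χ) := by
    refine (sum_card_bipartiteAbove_eq_sum_card_bipartiteBelow
      (r := fun w χ ↦ w ∈ minTrace r Δ X A χ)).trans (sum_congr rfl fun χ _ ↦ ?_)
    rw [bipartiteBelow, filter_mem_eq_inter, inter_eq_right.2 minTrace_subset]
  refine ⟨v, hv, ?_⟩
  calc #A * gamma r Δ X = ∑ w ∈ A, gamma r Δ X := by rw [sum_const, smul_eq_mul]
    _ ≤ ∑ w ∈ A, (gamma r Δ (X \ {w}) + #{χ ∈ hfin.toFinset | w ∈ minTrace r Δ X A χ}) :=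
        sum_le_sum fun w hw ↦ gamma_le_gamma_diff_singleton_add hfin hw
    _ ≤ #A * gamma r Δ (X \ {v}) + ∑ χ ∈ hfin.toFinset, #(minTrace r Δ X A χ) := by
        rw [sum_add_distrib, hdouble]
        gcongr
        exact sum_le_card_nsmul A _ _ hmax
    _ ≤ _ := by
        gcongr
        exact sum_card_minTrace_le hdet hX hfin t

end MinTrace

theorem main_lemma_rep_general (r : ℕ) (Δ : Finset ℕ → ℕ) (m : ℕ)
    (X : Set ℕ) (hX : X.Infinite) (hXm : gamma r Δ X = m)
    (A : Finset ℕ) (hAne : A.Nonempty)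
    (hdet : ∀ e₁ e₂ : Finset ℕ, ↑e₁ ⊆ X → e₁.card = r → ↑e₂ ⊆ X → e₂.card = r →
      e₁ ∩ A = e₂ ∩ A → Δ e₁ = Δ e₂)
    (hdel : ∀ v ∈ A, gamma r Δ (X \ {v}) < m)
    (a : ℕ) (ha : a = A.card)
    (s t : ℕ)
    (hrep : m = (∑ i ∈ Finset.Icc (t + 1) r, Nat.choose a i) + s + 1) :
    ∃ m' ∈ Fdelta r Δ,
      ((∑ i ∈ Finset.Icc (t + 1) r, Nat.choose (a - 1) i : ℕ) : ℚ)
          + (1 - (t : ℚ) / (a : ℚ)) * (s : ℚ) + 1 ≤ (m' : ℚ) ∧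
      m' < m := by
  have hfin : (coloursOn r Δ X).Finite :=
    Set.finite_of_ncard_ne_zero (by rw [← gamma, hXm, hrep]; omega)
  obtain ⟨v, hv, hmul⟩ := exists_mul_gamma_le hdet (hX.sdiff A.finite_toSet) hAne hfin t
  refine ⟨gamma r Δ (X \ {v}), ⟨X \ {v}, hX.sdiff (Set.finite_singleton v), rfl⟩, ?_, hdel v hv⟩
  rw [hXm, ← ha] at hmul
  exact sum_choose_pred_add_le_of_mul_le (ha ▸ hAne.card_pos) hrep hmul

/-- **Lemma 5, final part (Claim C).** Let `m ∈ F_Δ` with `m ≥ 2`, and let `X`, `A` be as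
guaranteed by the main lemma, with `a = |A|` (so that `Σ_{i=0}^{r} C(a,i) ≥ m`). If
`m = Σ_{i=t+1}^{r} C(a,i) + s + 1` with `s ≥ 0` and `0 ≤ t + 1 ≤ r`, then `F_Δ` meets
`[Σ_{i=t+1}^{r} C(a-1,i) + (1 - t/a)·s + 1, m)`. -/
theorem main_lemma_rep (r k : ℕ) (hr : 2 ≤ r) (hk : 1 ≤ k) (Δ : Finset ℕ → ℕ)
    (hΔ : IsColouring r k Δ) (m : ℕ) (hm : m ∈ Fdelta r Δ) (hm2 : 2 ≤ m)
    (X : Set ℕ) (hX : X.Infinite) (hXm : gamma r Δ X = m)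
    (A : Finset ℕ) (hAX : ↑A ⊆ X) (hAne : A.Nonempty)
    (hdet : ∀ e₁ e₂ : Finset ℕ, ↑e₁ ⊆ X → e₁.card = r → ↑e₂ ⊆ X → e₂.card = r →
      e₁ ∩ A = e₂ ∩ A → Δ e₁ = Δ e₂)
    (hdel : ∀ v ∈ A, gamma r Δ (X \ {v}) < m)
    (a : ℕ) (ha : a = A.card)
    (s t : ℕ) (ht : t + 1 ≤ r)
    (hrep : m = (∑ i ∈ Finset.Icc (t + 1) r, Nat.choose a i) + s + 1) :
    ∃ m' ∈ Fdelta r Δ,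
      ((∑ i ∈ Finset.Icc (t + 1) r, Nat.choose (a - 1) i : ℕ) : ℚ)
          + (1 - (t : ℚ) / (a : ℚ)) * (s : ℚ) + 1 ≤ (m' : ℚ) ∧
      m' < m :=
  main_lemma_rep_general r Δ m X hX hXm A hAne hdet hdel a ha s t hrep
end
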